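/- The centralizer of ĥ(φ) in Out N is induced by the centralizer of φ in Aut N: if s ∈ Out N satisfies s ĥ(φ) = ĥ(φ) s, then there exists σ ∈ Aut N with σ φ = φ σ and ĥ(σ) = s; conversely, ĥ(σ) commutes with ĥ(φ) for every σ ∈ Aut N commuting with φ. -/

import Mathlib

/-!
Setting: `X` is an infinite set, `F` the free group on `X`, and
`N X = F/γ₃(F)` the free nilpotent group of class two on `X`.
-/

namespace FreeNilp

/-- The free nilpotent group of class two on `X`:  `F/γ₃(F)`, where
`γ₃(F) = [[F,F],F]` is the third term of the lower central series of `F`. -/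
abbrev N (X : Type*) := FreeGroup X ⧸ (⊤ : Subgroup (FreeGroup X)).lowerCentralSeries 2

/-- The image in `N X` of the generator `x ∈ X`. -/
def xb {X : Type*} (x : X) : N X := QuotientGroup.mk (FreeGroup.of x)

/-- The group of inner automorphisms `Inn G`, as a subgroup of `MulAut G`;
`MulAut.conj z` is the inner automorphism `τ_z : a ↦ z a z⁻¹`. -/
def Inn (G : Type*) [Group G] : Subgroup (MulAut G) := (MulAut.conj (G := G)).range

instance Inn.normal (G : Type*) [Group G] : (Inn G).Normal := by
  constructor
  rintro m ⟨z, rfl⟩ g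
  refine ⟨g z, ?_⟩
  ext a
  simp [MulAut.conj_apply, map_mul, map_inv, mul_assoc]

/-- The outer automorphism group `Out G = Aut G / Inn G`. -/
abbrev Out (G : Type*) [Group G] := MulAut G ⧸ Inn G

/-- The quotient homomorphism `ĥ : Aut G → Out G`. -/
def hhat (G : Type*) [Group G] : MulAut G →* Out G := QuotientGroup.mk' (Inn G)

/-- IA-automorphisms: automorphisms inducing the identity on the abelianization. -/
def IA {G : Type*} [Group G] (α : MulAut G) : Prop :=
  ∀ g : G, Abelianization.of (α g) = Abelianization.of g

/-- A-symmetries in `Aut G`: automorphisms inducing the inversion automorphism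
`-id : a ↦ a⁻¹` of the abelianization. -/
def ASym {G : Type*} [Group G] (θ : MulAut G) : Prop :=
  ∀ g : G, Abelianization.of (θ g) = (Abelianization.of g)⁻¹

/-- A-symmetries in `Out G`: elements induced by A-symmetries of `Aut G`
(equivalently, inducing inversion on the abelianization). -/
def ASymO {G : Type*} [Group G] (t : Out G) : Prop :=
  ∃ θ : MulAut G, hhat G θ = t ∧ ASym θ

/-- The endomorphism of the abelianization induced by an automorphism of `G`. -/
def abMap {G : Type*} [Group G] (σ : MulAut G) : Abelianization G →* Abelianization G :=
  Abelianization.map σ.toMonoidHom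

/-- `S` is a free generating set (a "ℤ-basis", written multiplicatively) of the abelian
group `H`:  `S` generates `H`, and every `ℤ`-valued function on `S` extends to a
homomorphism `H → ℤ` (the universal property of a free abelian group with basis `S`). -/
def IsFreeAbelianBasisOf {G : Type*} [Group G] (S : Set G) (H : Subgroup G) : Prop :=
  Subgroup.closure S = H ∧
    ∀ g : G → ℤ, ∃ φ : H →* Multiplicative ℤ,
      ∀ s, s ∈ S → ∀ h : s ∈ H, φ ⟨s, h⟩ = Multiplicative.ofAdd (g s)

/-- `σ : Aut (N X)` induces an extremal involution of the abelianization `A`: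
for some free generating set `{a} ∪ C` of `A` the induced map sends `a` to `a⁻¹`
and fixes `C` pointwise. -/
def AExtremal {G : Type*} [Group G] (σ : MulAut G) : Prop :=
  ∃ (a : Abelianization G) (C : Set (Abelianization G)),
    a ∉ C ∧ IsFreeAbelianBasisOf (insert a C) ⊤ ∧
      abMap σ a = a⁻¹ ∧ ∀ c ∈ C, abMap σ c = c

/-- A basis (free generating set) of `N X`: the image of the canonical generating set
`{x̄ : x ∈ X}` under an automorphism of `N X`. -/
def IsBasisN {X : Type*} (B : Set (N X)) : Prop :=
  ∃ e : MulAut (N X), B = ⇑e '' Set.range (xb : X → N X)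

/-- Extremal involutions in `Aut (N X)`: automorphisms inverting one element of some
basis of `N X` and fixing all the other elements of that basis. -/
def IsExtremalAut {X : Type*} (ψ : MulAut (N X)) : Prop :=
  ∃ B : Set (N X), IsBasisN B ∧
    ∃ b₀ ∈ B, ψ b₀ = b₀⁻¹ ∧ ∀ b ∈ B, b ≠ b₀ → ψ b = b

/-- The subgroup `G_b = {s ∈ Out (N X) : s̄(b̄N') = b̄N'}` of `Out (N X)`, as a set:
outer automorphisms whose induced automorphism of the abelianization fixes the image
of the generator `b`. -/
def Gb {X : Type*} (b : X) : Set (Out (N X)) :=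
  {s | ∀ σ : MulAut (N X), hhat (N X) σ = s →
    Abelianization.of (σ (xb b)) = Abelianization.of (xb b)}

end FreeNilp

open FreeNilp

/-!
If `ĥ(σ)` commutes with `ĥ(φ)`, then `σ φ = τ_z φ σ` for some `z ∈ N`, and since `φ² = 1`
the element `z φ(z)` is central. The centre of `N` is the kernel of the abelianization
`N → ℤ^(X)` (as the Heisenberg quotients `x̄ ↦ p`, `ȳ ↦ q`, other generators `↦ 1` show), so the
abelianization of `z` is `k x̄₀`. Mapping `σ φ = τ_z φ σ` to the Heisenberg group over `𝔽₂`,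
on which `φ` acts trivially, shows that `k = 2m` is even. Then `w z φ(w)⁻¹` is central for
`w = x̄₀⁻ᵐ`, which means that `τ_w σ` commutes with `φ`.
-/

theorem Subgroup.lowerCentralSeries_two_eq_bot_iff {G : Type*} [Group G] :
    (⊤ : Subgroup G).lowerCentralSeries 2 = ⊥ ↔ _root_.commutator G ≤ center G := by
  rw [lowerCentralSeries_succ, top_lowerCentralSeries_one,
    commutator_top_right_eq_bot_iff_le_center]

section OuterAutomorphisms

variable {G : Type*} [Group G]

theorem hhat_conj (g : G) : hhat G (MulAut.conj g) = 1 :=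
  (QuotientGroup.eq_one_iff _).mpr ⟨g, rfl⟩

theorem exists_conj_of_commute_hhat {σ φ : MulAut G} (h : Commute (hhat G σ) (hhat G φ)) :
    ∃ z : G, σ * φ = MulAut.conj z * (φ * σ) := by
  rw [Commute, SemiconjBy, ← map_mul, ← map_mul] at h
  obtain ⟨z, hz⟩ := QuotientGroup.eq_iff_div_mem.mp h
  exact ⟨z, div_eq_iff_eq_mul.mp hz.symm⟩

theorem mul_apply_mem_center_of_conj {σ φ : MulAut G} {z : G} (hφ : ∀ g, φ (φ g) = g)
    (h : σ * φ = MulAut.conj z * (φ * σ)) : z * φ z ∈ Subgroup.center G := by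
  rw [Subgroup.mem_center_iff]
  intro g
  obtain ⟨k, rfl⟩ := σ.surjective g
  have hk : σ k = z * φ z * σ k * (z * φ z)⁻¹ := by
    have h₁ := DFunLike.congr_fun h (φ k)
    have h₂ := DFunLike.congr_fun h k
    simp only [MulAut.mul_apply, MulAut.conj_apply, hφ] at h₁ h₂
    conv_lhs => rw [h₁, h₂, map_mul, map_mul, map_inv, hφ]
    group
  exact eq_mul_inv_iff_mul_eq.mp hk

theorem commute_conj_mul_of_conj {σ φ : MulAut G} {z w : G}
    (h : σ * φ = MulAut.conj z * (φ * σ)) (hw : w * z * (φ w)⁻¹ ∈ Subgroup.center G) :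
    Commute (MulAut.conj w * σ) φ := by
  ext g
  have hg := DFunLike.congr_fun h g
  simp only [MulAut.mul_apply, MulAut.conj_apply] at hg ⊢
  rw [hg, map_mul, map_mul, map_inv]
  calc w * (z * φ (σ g) * z⁻¹) * w⁻¹
      = (w * z * (φ w)⁻¹) * (φ w * φ (σ g) * (φ w)⁻¹) * (w * z * (φ w)⁻¹)⁻¹ := by group
    _ = φ w * φ (σ g) * (φ w)⁻¹ := by
      rw [← Subgroup.mem_center_iff.mp hw, mul_inv_cancel_right]

end OuterAutomorphisms

open scoped commutatorElement

/-- The Heisenberg group over `R`: `⟨a, b, c⟩` is the matrix `[[1, a, c], [0, 1, b], [0, 0, 1]]`. -/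
@[ext]
structure Heis (R : Type*) where
  a : R
  b : R
  c : R

namespace Heis

variable {R : Type*} [CommRing R]

instance : Mul (Heis R) := ⟨fun u v => ⟨u.a + v.a, u.b + v.b, u.c + v.c + u.a * v.b⟩⟩
instance : One (Heis R) := ⟨⟨0, 0, 0⟩⟩
instance : Inv (Heis R) := ⟨fun u => ⟨-u.a, -u.b, u.a * u.b - u.c⟩⟩

@[simp] lemma mul_a (u v : Heis R) : (u * v).a = u.a + v.a := rfl
@[simp] lemma mul_b (u v : Heis R) : (u * v).b = u.b + v.b := rfl
@[simp] lemma mul_c (u v : Heis R) : (u * v).c = u.c + v.c + u.a * v.b := rfl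
@[simp] lemma one_a : (1 : Heis R).a = 0 := rfl
@[simp] lemma one_b : (1 : Heis R).b = 0 := rfl
@[simp] lemma one_c : (1 : Heis R).c = 0 := rfl
@[simp] lemma inv_a (u : Heis R) : u⁻¹.a = -u.a := rfl
@[simp] lemma inv_b (u : Heis R) : u⁻¹.b = -u.b := rfl
@[simp] lemma inv_c (u : Heis R) : u⁻¹.c = u.a * u.b - u.c := rfl

instance : Group (Heis R) where
  mul_assoc u v w := by ext <;> simp <;> ring
  one_mul u := by ext <;> simp
  mul_one u := by ext <;> simp
  inv_mul_cancel u := by ext <;> simp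

def p : Heis R := ⟨1, 0, 0⟩
def q : Heis R := ⟨0, 1, 0⟩

def aHom : Heis R →* Multiplicative R where
  toFun u := Multiplicative.ofAdd u.a
  map_one' := rfl
  map_mul' _ _ := rfl

def bHom : Heis R →* Multiplicative R where
  toFun u := Multiplicative.ofAdd u.b
  map_one' := rfl
  map_mul' _ _ := rfl

theorem commute_iff {u v : Heis R} : Commute u v ↔ u.a * v.b = v.a * u.b := by
  constructor
  · intro h
    have := congrArg c h.eq
    simp only [mul_c] at this
    linear_combination this
  · intro h
    ext <;> simp only [mul_a, mul_b, mul_c] <;> [ring; ring; linear_combination h]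

theorem commutatorElement_mem_center (u v : Heis R) : ⁅u, v⁆ ∈ Subgroup.center (Heis R) := by
  rw [Subgroup.mem_center_iff]
  intro g
  refine (commute_iff.mpr ?_).eq
  simp only [commutatorElement_def, mul_a, mul_b, inv_a, inv_b]
  ring

theorem lowerCentralSeries_two_eq_bot : (⊤ : Subgroup (Heis R)).lowerCentralSeries 2 = ⊥ := by
  rw [Subgroup.lowerCentralSeries_two_eq_bot_iff, commutator_def, Subgroup.commutator_le]
  exact fun u _ v _ => commutatorElement_mem_center u v

theorem inv_eq_self_of_b_eq_zero [CharP R 2] {u : Heis R} (hu : u.b = 0) : u⁻¹ = u := by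
  ext <;> simp [hu, CharTwo.neg_eq]

end Heis

namespace FreeNilp

variable {X : Type*}

theorem lowerCentralSeries_two_eq_bot : (⊤ : Subgroup (N X)).lowerCentralSeries 2 = ⊥ := by
  rw [← Subgroup.map_top_of_surjective _ (QuotientGroup.mk'_surjective _),
    ← Subgroup.map_lowerCentralSeries, Subgroup.map_eq_bot_iff, QuotientGroup.ker_mk']

theorem commutator_le_center : commutator (N X) ≤ Subgroup.center (N X) :=
  Subgroup.lowerCentralSeries_two_eq_bot_iff.mp lowerCentralSeries_two_eq_bot

theorem hom_ext {M : Type*} [Monoid M] {f g : N X →* M} (h : ∀ x, f (xb x) = g (xb x)) :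
    f = g :=
  QuotientGroup.monoidHom_ext _ (FreeGroup.ext_hom _ _ h)

def lift {H : Type*} [Group H] (hH : (⊤ : Subgroup H).lowerCentralSeries 2 = ⊥) (f : X → H) :
    N X →* H :=
  QuotientGroup.lift _ (FreeGroup.lift f) <| (Subgroup.map_eq_bot_iff _).mp <| eq_bot_iff.mpr <| by
    rw [Subgroup.map_lowerCentralSeries, ← hH]
    exact Subgroup.lowerCentralSeries_mono 2 le_top

@[simp]
theorem lift_xb {H : Type*} [Group H] (hH : (⊤ : Subgroup H).lowerCentralSeries 2 = ⊥)
    (f : X → H) (x : X) : lift hH f (xb x) = f x :=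
  FreeGroup.lift_apply_of

noncomputable def toFinsupp : N X →* Multiplicative (X →₀ ℤ) :=
  lift (Subgroup.lowerCentralSeries_two_eq_bot_iff.mpr (by simp [CommGroup.center_eq_top]))
    fun x => .ofAdd (Finsupp.single x 1)

@[simp]
theorem toFinsupp_xb (x : X) : toFinsupp (xb x) = .ofAdd (Finsupp.single x 1) :=
  lift_xb _ _ x

theorem mem_center_of_toFinsupp_eq_one {u : N X} (hu : toFinsupp u = 1) :
    u ∈ Subgroup.center (N X) := by
  let γ : Multiplicative (X →₀ ℤ) →* Abelianization (N X) :=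
    AddMonoidHom.toMultiplicativeLeft <|
      Finsupp.liftAddHom fun x => zmultiplesHom _ (.ofMul (Abelianization.of (xb x)))
  have hγ : γ.comp toFinsupp = Abelianization.of := hom_ext fun x => by
    simp [γ, AddMonoidHom.coe_toMultiplicativeLeft]
  have hu' : u ∈ Abelianization.of.ker := by
    rw [MonoidHom.mem_ker, ← hγ, MonoidHom.comp_apply, hu, map_one]
  exact commutator_le_center (Abelianization.ker_of (G := N X) ▸ hu')

section HeisHom

variable [DecidableEq X] (R : Type*) [CommRing R]

def heisHom (a b : X) : N X →* Heis R :=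
  lift Heis.lowerCentralSeries_two_eq_bot fun x =>
    if x = a then Heis.p else if x = b then Heis.q else 1

variable {R}

@[simp]
theorem heisHom_xb_left (a b : X) : heisHom R a b (xb a) = Heis.p := by
  simp [heisHom]

@[simp]
theorem heisHom_xb_right {a b : X} (hab : a ≠ b) : heisHom R a b (xb b) = Heis.q := by
  simp [heisHom, hab.symm]

theorem heisHom_a (a b : X) (w : N X) : (heisHom R a b w).a = (toFinsupp w).toAdd a := by
  have : Heis.aHom.comp (heisHom R a b) = (Int.castAddHom R).toMultiplicative.comp
      ((Finsupp.applyAddHom a).toMultiplicative.comp toFinsupp) := hom_ext fun x => by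
    obtain rfl | hxa := eq_or_ne x a
    · simp [heisHom, Heis.aHom, Heis.p]
    obtain rfl | hxb := eq_or_ne x b
    · simp [heisHom, Heis.aHom, Heis.q, hxa, Ne.symm hxa]
    · simp [heisHom, Heis.aHom, hxa, hxb, Ne.symm hxa]
  exact congrArg Multiplicative.toAdd (DFunLike.congr_fun this w)

theorem heisHom_b {a b : X} (hab : a ≠ b) (w : N X) :
    (heisHom R a b w).b = (toFinsupp w).toAdd b := by
  have : Heis.bHom.comp (heisHom R a b) = (Int.castAddHom R).toMultiplicative.comp
      ((Finsupp.applyAddHom b).toMultiplicative.comp toFinsupp) := hom_ext fun x => by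
    obtain rfl | hxa := eq_or_ne x a
    · simp [heisHom, Heis.bHom, Heis.p, hab]
    obtain rfl | hxb := eq_or_ne x b
    · simp [heisHom, Heis.bHom, Heis.q, hxa]
    · simp [heisHom, Heis.bHom, hxa, hxb, Ne.symm hxb]
  exact congrArg Multiplicative.toAdd (DFunLike.congr_fun this w)

end HeisHom

theorem mem_center_iff [Nontrivial X] {u : N X} :
    u ∈ Subgroup.center (N X) ↔ toFinsupp u = 1 := by
  classical
  refine ⟨fun hu => ?_, mem_center_of_toFinsupp_eq_one⟩
  ext a
  obtain ⟨b, hba⟩ := exists_ne a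
  have hcomm : Commute Heis.p (heisHom ℤ b a u) := by
    simpa using Commute.map (Subgroup.mem_center_iff.mp hu (xb b)) (heisHom ℤ b a)
  have := Heis.commute_iff.mp hcomm
  simpa [Heis.p, heisHom_b hba] using this

structure IsInversionAt (x₀ : X) (φ : MulAut (N X)) : Prop where
  map_self : φ (xb x₀) = (xb x₀)⁻¹
  map_of_ne : ∀ y, y ≠ x₀ → φ (xb y) = xb y

namespace IsInversionAt

variable {x₀ : X} {φ : MulAut (N X)}

theorem apply_apply (hφ : IsInversionAt x₀ φ) (n : N X) : φ (φ n) = n := by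
  have : φ.toMonoidHom.comp φ.toMonoidHom = MonoidHom.id (N X) := hom_ext fun x => by
    obtain rfl | hx := eq_or_ne x x₀
    · simp [hφ.map_self]
    · simp [hφ.map_of_ne x hx]
  exact DFunLike.congr_fun this n

theorem hom_apply_eq (hφ : IsInversionAt x₀ φ) {M : Type*} [Group M] {f : N X →* M}
    (hf : (f (xb x₀))⁻¹ = f (xb x₀)) (n : N X) : f (φ n) = f n := by
  have : f.comp φ.toMonoidHom = f := hom_ext fun x => by
    obtain rfl | hx := eq_or_ne x x₀
    · simpa [hφ.map_self] using hf
    · simp [hφ.map_of_ne x hx]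
  exact DFunLike.congr_fun this n

theorem toFinsupp_apply_of_ne (hφ : IsInversionAt x₀ φ) {y : X} (hy : y ≠ x₀) (n : N X) :
    (toFinsupp (φ n)).toAdd y = (toFinsupp n).toAdd y :=
  congrArg Multiplicative.toAdd <|
    hφ.hom_apply_eq (f := (Finsupp.applyAddHom y).toMultiplicative.comp toFinsupp)
      (by simp [hy.symm]) n

theorem toFinsupp_apply_eq_zero_of_mul_mem_center [Nontrivial X] (hφ : IsInversionAt x₀ φ)
    {z : N X} (hz : z * φ z ∈ Subgroup.center (N X)) {y : X} (hy : y ≠ x₀) :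
    (toFinsupp z).toAdd y = 0 := by
  have := congrArg (fun f => f.toAdd y) (mem_center_iff.mp hz)
  simp only [map_mul, toAdd_mul, Finsupp.add_apply, hφ.toFinsupp_apply_of_ne hy, toAdd_one,
    Finsupp.zero_apply] at this
  omega

theorem even_toFinsupp_apply_self [Nontrivial X] [DecidableEq X] (hφ : IsInversionAt x₀ φ)
    {σ : MulAut (N X)} {z : N X} (h : σ * φ = MulAut.conj z * (φ * σ)) :
    Even ((toFinsupp z).toAdd x₀) := by
  obtain ⟨y, hy⟩ := exists_ne x₀
  have rel (n : N X) : σ (φ n) = z * φ (σ n) * z⁻¹ := DFunLike.congr_fun h n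
  set ρ := heisHom (ZMod 2) x₀ y
  -- `σ` commutes with the action of `φ` on the abelianization, so it preserves the
  -- `(-1)`-eigenspace `ℤ x̄₀`.
  have hσ : (toFinsupp (σ (xb x₀))).toAdd y = 0 := by
    have := congrArg (fun n => (toFinsupp n).toAdd y) (rel (xb x₀))
    simp [hφ.map_self, hφ.toFinsupp_apply_of_ne hy] at this
    omega
  have hρ : ∀ n, ρ (φ n) = ρ n :=
    hφ.hom_apply_eq (Heis.inv_eq_self_of_b_eq_zero (by simp [ρ, Heis.p]))
  have hρσ : ∀ n, ρ (σ (φ n)) = ρ (σ n) :=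
    hφ.hom_apply_eq (f := ρ.comp σ.toMonoidHom)
      (Heis.inv_eq_self_of_b_eq_zero (by simp [ρ, heisHom_b hy.symm, hσ]))
  have hcomm : Commute (ρ z) Heis.q := by
    have := congrArg ρ (rel (σ.symm (xb y)))
    rw [map_mul, map_mul, map_inv, hρσ, hρ, MulEquiv.apply_symm_apply,
      heisHom_xb_right hy.symm] at this
    exact (eq_mul_inv_iff_mul_eq.mp this).symm
  have := Heis.commute_iff.mp hcomm
  simp [Heis.q, ρ, heisHom_a] at this
  exact ZMod.intCast_eq_zero_iff_even.mp this

theorem exists_mul_mul_inv_mem_center [Nontrivial X] (hφ : IsInversionAt x₀ φ)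
    {σ : MulAut (N X)} {z : N X} (h : σ * φ = MulAut.conj z * (φ * σ)) :
    ∃ w : N X, w * z * (φ w)⁻¹ ∈ Subgroup.center (N X) := by
  classical
  obtain ⟨m, hm⟩ := hφ.even_toFinsupp_apply_self h
  have hz {y : X} (hy : y ≠ x₀) :=
    hφ.toFinsupp_apply_eq_zero_of_mul_mem_center
      (mul_apply_mem_center_of_conj hφ.apply_apply h) hy
  refine ⟨xb x₀ ^ (-m), mem_center_iff.mpr ?_⟩
  rw [map_zpow, hφ.map_self, inv_zpow, inv_inv]
  apply Multiplicative.toAdd.injective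
  ext t
  obtain rfl | ht := eq_or_ne t x₀
  · simp [hm]
  · simp [hz ht, ht.symm]

end IsInversionAt

end FreeNilp

/-- The centralizer of `ĥ(φ)` in `Out N` is induced by the centralizer
of `φ` in `Aut N`. -/
theorem stmt16 (X : Type*) [Infinite X] (x₀ : X) (φ : MulAut (N X))
    (hφ₀ : φ (xb x₀) = (xb x₀)⁻¹) (hφ : ∀ y : X, y ≠ x₀ → φ (xb y) = xb y) :
    (∀ s : Out (N X), s * hhat (N X) φ = hhat (N X) φ * s →
      ∃ σ : MulAut (N X), σ * φ = φ * σ ∧ hhat (N X) σ = s) ∧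
    (∀ σ : MulAut (N X), σ * φ = φ * σ →
      hhat (N X) σ * hhat (N X) φ = hhat (N X) φ * hhat (N X) σ) := by
  have hinv : IsInversionAt x₀ φ := ⟨hφ₀, hφ⟩
  refine ⟨fun s hs => ?_, fun σ h => by rw [← map_mul, h, map_mul]⟩
  obtain ⟨σ, rfl⟩ := QuotientGroup.mk'_surjective (Inn (N X)) s
  obtain ⟨z, hz⟩ := exists_conj_of_commute_hhat hs
  obtain ⟨w, hw⟩ := hinv.exists_mul_mul_inv_mem_center hz
  refine ⟨MulAut.conj w * σ, (commute_conj_mul_of_conj hz hw).eq, ?_⟩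
  rw [map_mul, hhat_conj, one_mul]
  rfl
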